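/- For every finite tree T there exists a hierarchical hub labeling H of T whose ℓ1-cost satisfies ∑_{u ∈ V} |H_u| ≤ 2 · OPT, where OPT is the minimum of ∑_{u ∈ V} |H'_u| over all hub labelings H' of T. -/

import Mathlib

open SimpleGraph

/-- `w` lies on the unique `u`-`v` path in a tree (characterized via distances). -/
def onPath {V : Type*} (G : SimpleGraph V) (u v w : V) : Prop :=
  G.dist u w + G.dist w v = G.dist u v

set_option linter.unusedSectionVars false

namespace HubAux

variable {V : Type*} {G : SimpleGraph V} [DecidableEq V]

section Paths
variable (hT : G.IsTree)
include hT

/-- the unique path between two vertices of a tree -/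
noncomputable def pth (u v : V) : G.Walk u v :=
  (hT.existsUnique_path u v).exists.choose

lemma pth_isPath (u v : V) : (pth hT u v).IsPath :=
  (hT.existsUnique_path u v).exists.choose_spec

lemma pth_unique {u v : V} (p : G.Walk u v) (hp : p.IsPath) : p = pth hT u v :=
  (hT.existsUnique_path u v).unique hp (pth_isPath hT u v)

lemma pth_length (u v : V) : (pth hT u v).length = G.dist u v := by
  obtain ⟨p, hp⟩ := hT.isConnected.exists_walk_length_eq_dist u v
  have := p.isPath_of_length_eq_dist hp
  rw [← pth_unique hT p this] at *; omega

lemma dist_split {u v w : V} (h : w ∈ (pth hT u v).support) : onPath G u v w := by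
  have h1 := SimpleGraph.dist_le ((pth hT u v).takeUntil w h)
  have h2 := SimpleGraph.dist_le ((pth hT u v).dropUntil w h)
  have h3 : ((pth hT u v).takeUntil w h).length + ((pth hT u v).dropUntil w h).length
      = (pth hT u v).length := by
    rw [← SimpleGraph.Walk.length_append, SimpleGraph.Walk.take_spec]
  have h4 := pth_length hT u v
  have h5 := hT.isConnected.dist_triangle (u := u) (v := w) (w := v)
  unfold onPath; omega

lemma onPath_iff_mem_support {u v w : V} :
    onPath G u v w ↔ w ∈ (pth hT u v).support := by
  constructor
  · intro h
    obtain ⟨p1, hp1⟩ := hT.isConnected.exists_walk_length_eq_dist u w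
    obtain ⟨p2, hp2⟩ := hT.isConnected.exists_walk_length_eq_dist w v
    have hq : (p1.append p2).length = G.dist u v := by
      rw [SimpleGraph.Walk.length_append, hp1, hp2]; exact h
    have hq2 := (p1.append p2).isPath_of_length_eq_dist hq
    rw [← pth_unique hT _ hq2]
    exact (SimpleGraph.Walk.mem_support_append_iff _ _).2 (Or.inl p1.end_mem_support)
  · exact dist_split hT

lemma support_sub {u v x y : V} (hy : y ∈ (pth hT u x).support) :
    y ∈ (pth hT u v).support ∨ y ∈ (pth hT v x).support := by
  have hb : ((pth hT u v).append (pth hT v x)).bypass = pth hT u x :=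
    pth_unique hT _ (SimpleGraph.Walk.bypass_isPath _)
  rw [← hb] at hy
  have := SimpleGraph.Walk.support_bypass_subset _ hy
  rwa [SimpleGraph.Walk.mem_support_append_iff _ _] at this

lemma onPath_self_left (u v : V) : onPath G u v u := by
  unfold onPath; rw [SimpleGraph.dist_self]; omega

lemma onPath_self_right (u v : V) : onPath G u v v := by
  unfold onPath; rw [SimpleGraph.dist_self]; omega

lemma onPath_self (u w : V) (h : onPath G u u w) : w = u := by
  unfold onPath at h
  rw [SimpleGraph.dist_self] at h
  have h0 : G.dist u w = 0 := by omega
  exact ((SimpleGraph.Connected.dist_eq_zero_iff hT.isConnected).mp h0).symm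

end Paths

section Comp
variable (hT : G.IsTree)

/-- path-closed subsets -/
def PathClosed (S : Finset V) : Prop :=
  ∀ u ∈ S, ∀ v ∈ S, ∀ w ∈ (pth hT u v).support, w ∈ S

/-- connectivity within `S` avoiding `c` -/
def conn (G : SimpleGraph V) (S : Finset V) (c u v : V) : Prop :=
  ∃ p : G.Walk u v, ∀ x ∈ p.support, x ∈ S ∧ x ≠ c

omit hT

lemma conn_refl {S : Finset V} {c u : V} (hu : u ∈ S) (hne : u ≠ c) : conn G S c u u :=
  ⟨SimpleGraph.Walk.nil, by simp [hu, hne]⟩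

lemma conn_symm {S : Finset V} {c u v : V} (h : conn G S c u v) : conn G S c v u := by
  obtain ⟨p, hp⟩ := h
  refine ⟨p.reverse, fun x hx => ?_⟩
  rw [SimpleGraph.Walk.support_reverse] at hx
  exact hp x (List.mem_reverse.mp hx)

lemma conn_trans {S : Finset V} {c u v x : V} (h : conn G S c u v) (h' : conn G S c v x) :
    conn G S c u x := by
  obtain ⟨p, hp⟩ := h; obtain ⟨q, hq⟩ := h'
  refine ⟨p.append q, ?_⟩
  intro y hy
  rcases (SimpleGraph.Walk.mem_support_append_iff _ _).mp hy with h | h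
  exacts [hp y h, hq y h]

lemma conn_mem_left {S : Finset V} {c u v : V} (h : conn G S c u v) : u ∈ S ∧ u ≠ c :=
  h.choose_spec u h.choose.start_mem_support

include hT

lemma not_mem_of_conn {S : Finset V} {c u v : V} (h : conn G S c u v) :
    c ∉ (pth hT u v).support := by
  obtain ⟨p, hp⟩ := h
  have hb : p.bypass = pth hT u v := pth_unique hT _ (SimpleGraph.Walk.bypass_isPath _)
  rw [← hb]
  intro hc
  exact (hp c (SimpleGraph.Walk.support_bypass_subset _ hc)).2 rfl

lemma conn_of_not_mem {S : Finset V} (hS : PathClosed hT S) {c u v : V}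
    (hu : u ∈ S) (hv : v ∈ S) (hc : c ∉ (pth hT u v).support) : conn G S c u v := by
  refine ⟨pth hT u v, fun x hx => ⟨hS u hu v hv x hx, ?_⟩⟩
  rintro rfl; exact hc hx

omit hT

/-- the component of `u` in `S` minus `c` -/
noncomputable def comp (G : SimpleGraph V) (S : Finset V) (c u : V) : Finset V :=
  letI := Classical.dec
  (S.erase c).filter (fun x => conn G S c u x)

lemma mem_comp {S : Finset V} {c u x : V} :
    x ∈ comp G S c u ↔ (x ∈ S ∧ x ≠ c) ∧ conn G S c u x := by
  classical
  simp only [comp, Finset.mem_filter, Finset.mem_erase]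
  constructor
  · rintro ⟨⟨h1, h2⟩, h3⟩; exact ⟨⟨h2, h1⟩, by convert h3⟩
  · rintro ⟨⟨h1, h2⟩, h3⟩; exact ⟨⟨h2, h1⟩, by convert h3⟩

lemma comp_eq_of_conn {S : Finset V} {c u v : V} (h : conn G S c u v) :
    comp G S c u = comp G S c v := by
  ext x
  simp only [mem_comp]
  exact ⟨fun ⟨a, b⟩ => ⟨a, conn_trans (conn_symm h) b⟩, fun ⟨a, b⟩ => ⟨a, conn_trans h b⟩⟩

lemma mem_comp_self {S : Finset V} {c u : V} (hu : u ∈ S) (hne : u ≠ c) :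
    u ∈ comp G S c u := mem_comp.mpr ⟨⟨hu, hne⟩, conn_refl hu hne⟩

lemma comp_eq_of_mem {S : Finset V} {c u x : V} (h : x ∈ comp G S c u) :
    comp G S c x = comp G S c u :=
  (comp_eq_of_conn (mem_comp.mp h).2).symm

lemma comp_subset {S : Finset V} {c u : V} : comp G S c u ⊆ S.erase c := by
  intro x hx
  have := mem_comp.mp hx
  exact Finset.mem_erase.mpr ⟨this.1.2, this.1.1⟩

include hT

lemma comp_pathClosed {S : Finset V} (hS : PathClosed hT S) {c u : V} :
    PathClosed hT (comp G S c u) := by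
  intro x hx z hz y hy
  obtain ⟨⟨hxS, hxc⟩, hux⟩ := mem_comp.mp hx
  obtain ⟨⟨hzS, hzc⟩, huz⟩ := mem_comp.mp hz
  have hxz : conn G S c x z := conn_trans (conn_symm hux) huz
  have hcp : c ∉ (pth hT x z).support := not_mem_of_conn hT hxz
  have hyS : y ∈ S := hS x hxS z hzS y hy
  have hxy : conn G S c x y := by
    refine ⟨(pth hT x z).takeUntil y hy, fun a ha => ?_⟩
    have haS := SimpleGraph.Walk.support_takeUntil_subset _ hy ha
    refine ⟨hS x hxS z hzS a haS, ?_⟩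
    rintro rfl; exact hcp haS
  exact mem_comp.mpr ⟨⟨hyS, fun h => hcp (h ▸ hy)⟩, conn_trans hux hxy⟩

lemma exists_step {S : Finset V} (hS : PathClosed hT S) {c u : V}
    (hc : c ∈ S) (hu : u ∈ S) (hne : u ≠ c) :
    ∃ c' : V, G.Adj c c' ∧ c' ∈ S ∧ conn G S c c' u ∧
      (∀ x, conn G S c u x → G.dist c x = 1 + G.dist c' x) ∧
      (∀ x ∈ S, x ≠ c → ¬ conn G S c u x → G.dist c' x = 1 + G.dist c x) := by
  set p := pth hT c u with hp
  have hnil : ¬ p.Nil := SimpleGraph.Walk.not_nil_of_ne (Ne.symm hne)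
  have hadj : G.Adj c (p.getVert 1) := SimpleGraph.Walk.adj_snd hnil
  set c' := p.getVert 1 with hc'
  have hsupcons : c :: p.tail.support = p.support := SimpleGraph.Walk.cons_support_tail hnil
  have hnodup : p.support.Nodup := (pth_isPath hT c u).2
  have hcnot : c ∉ p.tail.support := by
    rw [← hsupcons] at hnodup; exact (List.nodup_cons.mp hnodup).1
  have hsub : ∀ x ∈ p.tail.support, x ∈ S := by
    intro x hx
    have : x ∈ p.support := by rw [← hsupcons]; exact List.mem_cons_of_mem _ hx
    exact hS c hc u hu x this
  have hconn : conn G S c c' u := by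
    refine ⟨p.tail, fun x hx => ⟨hsub x hx, ?_⟩⟩
    rintro rfl; exact hcnot hx
  have hc'S : c' ∈ S := hsub c' p.tail.start_mem_support
  refine ⟨c', hadj, hc'S, hconn, ?_, ?_⟩
  · intro x hx
    have hcx : conn G S c c' x := conn_trans hconn hx
    have hcp : c ∉ (pth hT c' x).support := not_mem_of_conn hT hcx
    have hpath : (SimpleGraph.Walk.cons hadj (pth hT c' x)).IsPath := by
      rw [SimpleGraph.Walk.isPath_def, SimpleGraph.Walk.support_cons]
      exact List.nodup_cons.mpr ⟨hcp, (pth_isPath hT c' x).2⟩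
    have := pth_unique hT _ hpath
    have hlen : (SimpleGraph.Walk.cons hadj (pth hT c' x)).length = G.dist c x := by
      rw [this, pth_length]
    rw [SimpleGraph.Walk.length_cons, pth_length] at hlen
    omega
  · intro x hxS hxc hnconn
    have hcmem : c ∈ (pth hT c' x).support := by
      by_contra hcm
      exact hnconn (conn_trans (conn_symm hconn) (conn_of_not_mem hT hS hc'S hxS hcm))
    have := dist_split hT hcmem
    unfold onPath at this
    have h1 : G.dist c' c = 1 := SimpleGraph.dist_eq_one_iff_adj.mpr hadj.symm
    omega

lemma exists_centroid {S : Finset V} (hne : S.Nonempty) (hS : PathClosed hT S) :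
    ∃ c ∈ S, ∀ u ∈ S.erase c, 2 * (comp G S c u).card ≤ S.card := by
  obtain ⟨c, hcS, hmin⟩ := S.exists_min_image (fun c => ∑ x ∈ S, G.dist c x) hne
  refine ⟨c, hcS, ?_⟩
  intro u hu
  rw [Finset.mem_erase] at hu
  obtain ⟨hne', huS⟩ := hu
  obtain ⟨c', hadj, hc'S, hconn, hdown, hup⟩ := exists_step hT hS hcS huS hne'
  set C := comp G S c u with hC
  have hCsub : C ⊆ S.erase c := comp_subset
  have hmin' := hmin c' hc'S
  have hsplit : ∀ f : V → ℕ,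
      ∑ x ∈ S, f x = f c + (∑ x ∈ C, f x + ∑ x ∈ (S.erase c) \ C, f x) := by
    intro f
    rw [← Finset.add_sum_erase S f hcS, ← Finset.sum_sdiff hCsub]
    ring
  have h1 : ∀ x ∈ C, G.dist c x = 1 + G.dist c' x := fun x hx => hdown x (mem_comp.mp hx).2
  have h2 : ∀ x ∈ (S.erase c) \ C, G.dist c' x = 1 + G.dist c x := by
    intro x hx
    rw [Finset.mem_sdiff, Finset.mem_erase] at hx
    exact hup x hx.1.2 hx.1.1 (fun hcon => hx.2 (mem_comp.mpr ⟨⟨hx.1.2, hx.1.1⟩, hcon⟩))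
  have e1 : ∑ x ∈ C, G.dist c x = C.card + ∑ x ∈ C, G.dist c' x := by
    rw [Finset.sum_congr rfl h1, Finset.sum_add_distrib, Finset.sum_const, smul_eq_mul, mul_one]
  have e2 : ∑ x ∈ (S.erase c) \ C, G.dist c' x
      = ((S.erase c) \ C).card + ∑ x ∈ (S.erase c) \ C, G.dist c x := by
    rw [Finset.sum_congr rfl h2, Finset.sum_add_distrib, Finset.sum_const, smul_eq_mul, mul_one]
  have hcc : G.dist c c = 0 := SimpleGraph.dist_self
  have hc'c : G.dist c' c = 1 := SimpleGraph.dist_eq_one_iff_adj.mpr hadj.symm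
  have hcard : ((S.erase c) \ C).card + C.card = (S.erase c).card :=
    Finset.card_sdiff_add_card_eq_card hCsub
  have hScard : (S.erase c).card + 1 = S.card := by
    rw [Finset.card_erase_of_mem hcS]
    have : 1 ≤ S.card := Finset.card_pos.mpr hne
    omega
  rw [hsplit (fun x => G.dist c x), hsplit (fun x => G.dist c' x)] at hmin'
  omega

end Comp

section Main
variable [Fintype V] (hT : G.IsTree)
include hT

lemma main_induction : ∀ (n : ℕ) (S : Finset V), S.card ≤ n → S.Nonempty → PathClosed hT S →
    ∃ (H : V → Finset V) (r : V → ℕ),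
      (∀ u ∈ S, H u ⊆ S) ∧
      (∀ u ∈ S, ∀ v ∈ S, ∃ w, w ∈ H u ∧ w ∈ H v ∧ onPath G u v w) ∧
      (∀ u ∈ S, ∀ w ∈ H u, r w ≤ r u) ∧
      (Set.InjOn r S) ∧
      (∀ u ∈ S, r u < S.card) ∧
      (∀ H' : V → Finset V,
        (∀ u ∈ S, ∀ v ∈ S, ∃ w, w ∈ H' u ∧ w ∈ H' v ∧ onPath G u v w) →
        ∑ u ∈ S, (H u).card ≤ 2 * ∑ u ∈ S, ((H' u) ∩ S).card) := by
  intro n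
  induction n with
  | zero =>
    intro S hcard hne _
    have := Finset.card_pos.mpr hne
    omega
  | succ n IH =>
    intro S hcard hne hS
    obtain ⟨c, hcS, hcent⟩ := exists_centroid hT hne hS
    set E := S.erase c with hE
    have hcE : c ∉ E := Finset.notMem_erase c S
    have hEsub : E ⊆ S := Finset.erase_subset c S
    have hEq : ∀ u ∈ S, u ∉ E → u = c := by
      intro u hu h
      rw [hE, Finset.mem_erase] at h
      push_neg at h
      by_contra hne'
      exact absurd hu (h hne')
    have hEcard : E.card + 1 = S.card := by
      rw [hE, Finset.card_erase_of_mem hcS]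
      have : 1 ≤ S.card := Finset.card_pos.mpr hne
      omega
    set 𝒞 := E.image (fun u => comp G S c u) with h𝒞
    -- membership facts
    have hmemC : ∀ u ∈ E, comp G S c u ∈ 𝒞 := fun u hu => Finset.mem_image_of_mem _ hu
    have hCE : ∀ C ∈ 𝒞, C ⊆ E := by
      intro C hC
      obtain ⟨u, _, rfl⟩ := Finset.mem_image.mp hC
      exact comp_subset
    have hcomp_eq : ∀ C ∈ 𝒞, ∀ u ∈ C, comp G S c u = C := by
      intro C hC u hu
      obtain ⟨v, _, rfl⟩ := Finset.mem_image.mp hC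
      exact comp_eq_of_mem hu
    have hself : ∀ u ∈ E, u ∈ comp G S c u := by
      intro u hu
      rw [hE, Finset.mem_erase] at hu
      exact mem_comp_self hu.2 hu.1
    have hCne : ∀ C ∈ 𝒞, C.Nonempty := by
      intro C hC
      obtain ⟨v, hv, rfl⟩ := Finset.mem_image.mp hC
      exact ⟨v, hself v hv⟩
    -- partition facts
    have hdisj : ∀ C₁ ∈ 𝒞, ∀ C₂ ∈ 𝒞, C₁ ≠ C₂ → Disjoint C₁ C₂ := by
      intro C₁ h1 C₂ h2 hne'
      rw [Finset.disjoint_left]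
      intro x hx1 hx2
      exact hne' ((hcomp_eq C₁ h1 x hx1).symm.trans (hcomp_eq C₂ h2 x hx2))
    have hbiU : 𝒞.biUnion id = E := by
      apply Finset.Subset.antisymm
      · intro x hx
        rw [Finset.mem_biUnion] at hx
        obtain ⟨C, hC, hx⟩ := hx
        exact hCE C hC hx
      · intro x hx
        rw [Finset.mem_biUnion]
        exact ⟨comp G S c x, hmemC x hx, hself x hx⟩
    have hsumE : ∀ f : V → ℕ, ∑ u ∈ E, f u = ∑ C ∈ 𝒞, ∑ u ∈ C, f u := by
      intro f
      have hpd : Set.PairwiseDisjoint (↑𝒞 : Set (Finset V)) (id : Finset V → Finset V) :=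
        fun C1 h1 C2 h2 hne' => hdisj C1 h1 C2 h2 hne'
      rw [← hbiU, Finset.sum_biUnion hpd]
      rfl
    have hcardE : ∑ C ∈ 𝒞, C.card = E.card := by
      have h := Finset.card_biUnion (s := 𝒞) (t := id) hdisj
      rw [hbiU] at h
      simpa using h.symm
    have hsumS : ∀ f : V → ℕ, ∑ u ∈ S, f u = f c + ∑ u ∈ E, f u := by
      intro f
      rw [hE, Finset.add_sum_erase S f hcS]
    -- recursion
    have hrec : ∀ C ∈ 𝒞, ∃ (H : V → Finset V) (r : V → ℕ),
        (∀ u ∈ C, H u ⊆ C) ∧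
        (∀ u ∈ C, ∀ v ∈ C, ∃ w, w ∈ H u ∧ w ∈ H v ∧ onPath G u v w) ∧
        (∀ u ∈ C, ∀ w ∈ H u, r w ≤ r u) ∧
        (Set.InjOn r C) ∧
        (∀ u ∈ C, r u < C.card) ∧
        (∀ H' : V → Finset V,
          (∀ u ∈ C, ∀ v ∈ C, ∃ w, w ∈ H' u ∧ w ∈ H' v ∧ onPath G u v w) →
          ∑ u ∈ C, (H u).card ≤ 2 * ∑ u ∈ C, ((H' u) ∩ C).card) := by
      intro C hC
      have h1 : C.card ≤ n := by
        have := Finset.card_le_card (hCE C hC)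
        omega
      have h2 : PathClosed hT C := by
        obtain ⟨v, _, rfl⟩ := Finset.mem_image.mp hC
        exact comp_pathClosed hT hS
      exact IH C h1 (hCne C hC) h2
    choose HF rF p1 p2 p3 p4 p5 p6 using hrec
    let HF' : Finset V → V → Finset V := fun C =>
      if h : C ∈ 𝒞 then HF C h else fun _ => ∅
    let rF' : Finset V → V → ℕ := fun C =>
      if h : C ∈ 𝒞 then rF C h else fun _ => 0
    have hHF' : ∀ C (h : C ∈ 𝒞), HF' C = HF C h := fun C h => dif_pos h
    have hrF' : ∀ C (h : C ∈ 𝒞), rF' C = rF C h := fun C h => dif_pos h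
    -- the injection for ordering components
    obtain ⟨ι, hι⟩ : ∃ f : Finset V → ℕ, Function.Injective f := by
      classical
      exact exists_injective_nat (Finset V)
    set off : Finset V → ℕ := fun C => ∑ C' ∈ 𝒞.filter (fun C' => ι C' < ι C), C'.card
      with hoff
    have hoffmono : ∀ C ∈ 𝒞, ∀ C', ι C < ι C' → off C + C.card ≤ off C' := by
      intro C hC C' hlt
      have hsub : insert C (𝒞.filter (fun C'' => ι C'' < ι C))
          ⊆ 𝒞.filter (fun C'' => ι C'' < ι C') := by
        intro X hX
        rw [Finset.mem_insert] at hX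
        rcases hX with rfl | hX
        · exact Finset.mem_filter.mpr ⟨hC, hlt⟩
        · rw [Finset.mem_filter] at hX ⊢
          exact ⟨hX.1, lt_trans hX.2 hlt⟩
      have hnm : C ∉ 𝒞.filter (fun C'' => ι C'' < ι C) := by
        intro h
        exact lt_irrefl _ (Finset.mem_filter.mp h).2
      have hin : off C + C.card
          = ∑ X ∈ insert C (𝒞.filter (fun C'' => ι C'' < ι C)), X.card := by
        simp only [hoff]
        rw [Finset.sum_insert hnm]
        omega
      have hle : (∑ X ∈ insert C (𝒞.filter (fun C'' => ι C'' < ι C)), X.card)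
          ≤ ∑ X ∈ 𝒞.filter (fun C'' => ι C'' < ι C'), X.card :=
        Finset.sum_le_sum_of_subset hsub
      have hfin : off C' = ∑ X ∈ 𝒞.filter (fun C'' => ι C'' < ι C'), X.card := by
        simp only [hoff]
      omega
    have hoffbound : ∀ C ∈ 𝒞, off C + C.card ≤ E.card := by
      intro C hC
      rw [← hcardE]
      have hsub : insert C (𝒞.filter (fun C'' => ι C'' < ι C)) ⊆ 𝒞 := by
        intro X hX
        rw [Finset.mem_insert] at hX
        rcases hX with rfl | hX
        · exact hC
        · exact (Finset.mem_filter.mp hX).1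
      have hnm : C ∉ 𝒞.filter (fun C'' => ι C'' < ι C) := by
        intro h
        exact lt_irrefl _ (Finset.mem_filter.mp h).2
      have hin : off C + C.card
          = ∑ X ∈ insert C (𝒞.filter (fun C'' => ι C'' < ι C)), X.card := by
        simp only [hoff]
        rw [Finset.sum_insert hnm]
        omega
      have hle : (∑ X ∈ insert C (𝒞.filter (fun C'' => ι C'' < ι C)), X.card)
          ≤ ∑ C' ∈ 𝒞, C'.card :=
        Finset.sum_le_sum_of_subset hsub
      omega
    -- definitions of H and r
    classical
    set H : V → Finset V := fun u =>
      if u ∈ E then insert c (HF' (comp G S c u) u) else if u = c then {c} else ∅ with hH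
    set r : V → ℕ := fun u =>
      if u ∈ E then 1 + off (comp G S c u) + rF' (comp G S c u) u else 0 with hr
    have hHdef : ∀ u ∈ E, H u = insert c (HF' (comp G S c u) u) := by
      intro u hu; rw [hH]; simp [hu]
    have hHc : H c = {c} := by rw [hH]; simp [hcE]
    have hrdef : ∀ u ∈ E, r u = 1 + off (comp G S c u) + rF' (comp G S c u) u := by
      intro u hu; rw [hr]; simp [hu]
    have hrc : r c = 0 := by rw [hr]; simp [hcE]
    -- membership of c in all hubs
    have hcH : ∀ u ∈ S, c ∈ H u := by
      intro u hu
      by_cases h : u ∈ E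
      · rw [hHdef u h]; exact Finset.mem_insert_self c _
      · rw [hEq u hu h, hHc]; exact Finset.mem_singleton_self c
    have hHFsub : ∀ C ∈ 𝒞, ∀ u ∈ C, HF' C u ⊆ C := by
      intro C hC; rw [hHF' C hC]; exact p1 C hC
    have hHsubC : ∀ u ∈ E, H u = insert c (HF' (comp G S c u) u) ∧
        HF' (comp G S c u) u ⊆ comp G S c u := by
      intro u hu
      exact ⟨hHdef u hu, hHFsub _ (hmemC u hu) u (hself u hu)⟩
    refine ⟨H, r, ?_, ?_, ?_, ?_, ?_, ?_⟩
    · -- h1 : H u ⊆ S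
      intro u hu
      by_cases h : u ∈ E
      · obtain ⟨he, hsub⟩ := hHsubC u h
        rw [he]
        intro x hx
        rcases Finset.mem_insert.mp hx with rfl | hx
        · exact hcS
        · exact hEsub (hCE _ (hmemC u h) (hsub hx))
      · rw [hEq u hu h, hHc]
        intro x hx
        rw [Finset.mem_singleton] at hx
        rw [hx]; exact hcS
    · -- h2 : hub property
      intro u hu v hv
      by_cases hue : u ∈ E
      · by_cases hve : v ∈ E
        · by_cases heq : comp G S c u = comp G S c v
          · have hC : comp G S c u ∈ 𝒞 := hmemC u hue
            have huC : u ∈ comp G S c u := hself u hue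
            have hvC : v ∈ comp G S c u := by rw [heq]; exact hself v hve
            obtain ⟨w, hw1, hw2, hw3⟩ := p2 _ hC u huC v hvC
            refine ⟨w, ?_, ?_, hw3⟩
            · rw [hHdef u hue, hHF' _ hC]
              exact Finset.mem_insert_of_mem hw1
            · rw [hHdef v hve, ← heq, hHF' _ hC]
              exact Finset.mem_insert_of_mem hw2
          · refine ⟨c, hcH u hu, hcH v hv, ?_⟩
            rw [onPath_iff_mem_support hT]
            by_contra hcm
            exact heq (comp_eq_of_conn (conn_of_not_mem hT hS hu hv hcm))
        · refine ⟨c, hcH u hu, hcH v hv, ?_⟩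
          rw [hEq v hv hve]
          exact onPath_self_right hT u c
      · refine ⟨c, hcH u hu, hcH v hv, ?_⟩
        rw [hEq u hu hue]
        exact onPath_self_left hT c v
    · -- h3 : hierarchical
      intro u hu w hw
      by_cases hue : u ∈ E
      · rw [hHdef u hue] at hw
        rcases Finset.mem_insert.mp hw with rfl | hw
        · rw [hrc]; omega
        · have hC : comp G S c u ∈ 𝒞 := hmemC u hue
          have hwC : w ∈ comp G S c u := hHFsub _ hC u (hself u hue) hw
          have hwE : w ∈ E := hCE _ hC hwC
          have hcompw : comp G S c w = comp G S c u := hcomp_eq _ hC w hwC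
          rw [hrdef u hue, hrdef w hwE, hcompw, hrF' _ hC]
          have := p3 _ hC u (hself u hue) w (by rw [hHF' _ hC] at hw; exact hw)
          omega
      · rw [hEq u hu hue, hHc] at hw
        rw [Finset.mem_singleton] at hw
        rw [hEq u hu hue, hw]
    · -- h4 : injectivity on S
      intro u hu v hv heq
      simp only [Finset.coe_sort_coe, Finset.mem_coe] at hu hv
      by_cases hue : u ∈ E <;> by_cases hve : v ∈ E
      · -- both in E
        rw [hrdef u hue, hrdef v hve] at heq
        by_cases hcc : comp G S c u = comp G S c v
        · have hC : comp G S c u ∈ 𝒞 := hmemC u hue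
          rw [← hcc] at heq
          have hre : rF' (comp G S c u) u = rF' (comp G S c u) v := by omega
          rw [hrF' _ hC] at hre
          exact p4 _ hC (Finset.mem_coe.mpr (hself u hue))
            (Finset.mem_coe.mpr (by rw [hcc]; exact hself v hve)) hre
        · exfalso
          have hC : comp G S c u ∈ 𝒞 := hmemC u hue
          have hC' : comp G S c v ∈ 𝒞 := hmemC v hve
          have h5u : rF' (comp G S c u) u < (comp G S c u).card := by
            rw [hrF' _ hC]; exact p5 _ hC u (hself u hue)
          have h5v : rF' (comp G S c v) v < (comp G S c v).card := by
            rw [hrF' _ hC']; exact p5 _ hC' v (hself v hve)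
          rcases lt_trichotomy (ι (comp G S c u)) (ι (comp G S c v)) with hlt | hde | hlt
          · have := hoffmono _ hC _ hlt
            omega
          · exact hcc (hι hde)
          · have := hoffmono _ hC' _ hlt
            omega
      · rw [hrdef u hue, hEq v hv hve, hrc] at heq
        omega
      · rw [hrdef v hve, hEq u hu hue, hrc] at heq
        omega
      · rw [hEq u hu hue, hEq v hv hve]
    · -- h5 : range bound
      intro u hu
      by_cases hue : u ∈ E
      · rw [hrdef u hue]
        have hC : comp G S c u ∈ 𝒞 := hmemC u hue
        have h5u : rF' (comp G S c u) u < (comp G S c u).card := by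
          rw [hrF' _ hC]; exact p5 _ hC u (hself u hue)
        have := hoffbound _ hC
        omega
      · rw [hEq u hu hue, hrc]
        exact Finset.card_pos.mpr hne
    · -- h6 : cost bound
      intro H' hH'
      -- c is a hub of itself
      have hcH' : c ∈ H' c := by
        obtain ⟨w, hw1, _, hw3⟩ := hH' c hcS c hcS
        have := onPath_self hT c w hw3
        subst this; exact hw1
      have hcH'S : 1 ≤ ((H' c) ∩ S).card := by
        rw [Nat.one_le_iff_ne_zero, ← Nat.pos_iff_ne_zero, Finset.card_pos]
        exact ⟨c, Finset.mem_inter.mpr ⟨hcH', hcS⟩⟩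
      -- LHS computation
      have hLHS : ∑ u ∈ S, (H u).card
          = 1 + E.card + ∑ C ∈ 𝒞, ∑ u ∈ C, (HF' C u).card := by
        rw [hsumS (fun u => (H u).card), hHc, Finset.card_singleton,
          hsumE (fun u => (H u).card)]
        have : ∀ C ∈ 𝒞, ∑ u ∈ C, (H u).card = C.card + ∑ u ∈ C, (HF' C u).card := by
          intro C hC
          have : ∀ u ∈ C, (H u).card = (HF' C u).card + 1 := by
            intro u hu
            have huE : u ∈ E := hCE C hC hu
            have hcompu : comp G S c u = C := hcomp_eq C hC u hu
            rw [hHdef u huE, hcompu, Finset.card_insert_of_notMem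
              (fun hcc => hcE (hCE C hC (hHFsub C hC u hu hcc)))]
          rw [Finset.sum_congr rfl this, Finset.sum_add_distrib, Finset.sum_const,
            smul_eq_mul, mul_one]
          omega
        rw [Finset.sum_congr rfl this, Finset.sum_add_distrib, hcardE]
        omega
      -- per component cost bound from IH
      have hCC : ∀ C ∈ 𝒞, ∑ u ∈ C, (HF' C u).card ≤ 2 * ∑ u ∈ C, ((H' u) ∩ C).card := by
        intro C hC
        rw [hHF' C hC]
        refine p6 C hC H' ?_
        intro u hu v hv
        exact hH' u (hEsub (hCE C hC hu)) v (hEsub (hCE C hC hv))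
      have hX : ∑ C ∈ 𝒞, ∑ u ∈ C, (HF' C u).card
          ≤ 2 * ∑ C ∈ 𝒞, ∑ u ∈ C, ((H' u) ∩ C).card := by
        rw [Finset.mul_sum]
        exact Finset.sum_le_sum hCC
      -- bad vertices
      set bad : Finset V := E.filter (fun u => (H' u ∩ S) ⊆ comp G S c u) with hbad
      have hbadbound : 2 * bad.card ≤ S.card := by
        rcases Finset.eq_empty_or_nonempty bad with hb | ⟨u₀, hu₀⟩
        · rw [hb]
          simp
        · have hu₀E : u₀ ∈ E := (Finset.mem_filter.mp hu₀).1
          have hu₀sub : (H' u₀ ∩ S) ⊆ comp G S c u₀ := (Finset.mem_filter.mp hu₀).2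
          have hsubbad : bad ⊆ comp G S c u₀ := by
            intro v hv
            have hvE : v ∈ E := (Finset.mem_filter.mp hv).1
            have hvsub : (H' v ∩ S) ⊆ comp G S c v := (Finset.mem_filter.mp hv).2
            obtain ⟨w, hw1, hw2, hw3⟩ := hH' u₀ (hEsub hu₀E) v (hEsub hvE)
            have hwS : w ∈ S := by
              rw [onPath_iff_mem_support hT] at hw3
              exact hS u₀ (hEsub hu₀E) v (hEsub hvE) w hw3
            have hwu₀ : w ∈ comp G S c u₀ := hu₀sub (Finset.mem_inter.mpr ⟨hw1, hwS⟩)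
            have hwv : w ∈ comp G S c v := hvsub (Finset.mem_inter.mpr ⟨hw2, hwS⟩)
            have : comp G S c v = comp G S c u₀ :=
              (comp_eq_of_mem hwv).symm.trans (comp_eq_of_mem hwu₀)
            rw [← this]
            exact hself v hvE
          have := Finset.card_le_card hsubbad
          have := hcent u₀ hu₀E
          omega
      -- extras
      have hextra : ∀ u ∈ E, ((H' u) ∩ (comp G S c u)).card
            + (if (H' u ∩ S) ⊆ comp G S c u then 0 else 1) ≤ ((H' u) ∩ S).card := by
        intro u hu
        by_cases hb : (H' u ∩ S) ⊆ comp G S c u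
        · rw [if_pos hb]
          have : (H' u) ∩ (comp G S c u) ⊆ (H' u) ∩ S := by
            intro x hx
            rw [Finset.mem_inter] at hx ⊢
            exact ⟨hx.1, hEsub (comp_subset hx.2)⟩
          have := Finset.card_le_card this
          omega
        · rw [if_neg hb]
          obtain ⟨x, hx1, hx2⟩ := Finset.not_subset.mp hb
          have hins : insert x ((H' u) ∩ (comp G S c u)) ⊆ (H' u) ∩ S := by
            intro y hy
            rcases Finset.mem_insert.mp hy with rfl | hy
            · exact hx1
            · rw [Finset.mem_inter] at hy ⊢
              exact ⟨hy.1, hEsub (comp_subset hy.2)⟩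
          have hxnm : x ∉ (H' u) ∩ (comp G S c u) := by
            intro h
            exact hx2 (Finset.mem_inter.mp h).2
          have := Finset.card_le_card hins
          rw [Finset.card_insert_of_notMem hxnm] at this
          omega
      have hindsum : (∑ u ∈ E, (if (H' u ∩ S) ⊆ comp G S c u then 0 else 1)) + bad.card
          = E.card := by
        rw [hbad, Finset.card_filter]
        rw [← Finset.sum_add_distrib]
        rw [Finset.sum_congr rfl (fun u _ => ?_), Finset.sum_const, smul_eq_mul, mul_one]
        by_cases h : (H' u ∩ S) ⊆ comp G S c u <;> simp [h]
      have hsumext : ∑ u ∈ E, ((H' u) ∩ (comp G S c u)).card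
            + (∑ u ∈ E, (if (H' u ∩ S) ⊆ comp G S c u then 0 else 1))
          ≤ ∑ u ∈ E, ((H' u) ∩ S).card := by
        rw [← Finset.sum_add_distrib]
        exact Finset.sum_le_sum hextra
      have hcompsum : ∑ u ∈ E, ((H' u) ∩ (comp G S c u)).card
          = ∑ C ∈ 𝒞, ∑ u ∈ C, ((H' u) ∩ C).card := by
        rw [hsumE (fun u => ((H' u) ∩ (comp G S c u)).card)]
        refine Finset.sum_congr rfl (fun C hC => Finset.sum_congr rfl (fun u hu => ?_))
        rw [hcomp_eq C hC u hu]
      have hRHS : ∑ u ∈ S, ((H' u) ∩ S).card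
          = ((H' c) ∩ S).card + ∑ u ∈ E, ((H' u) ∩ S).card :=
        hsumS (fun u => ((H' u) ∩ S).card)
      omega

end Main

end HubAux

/-- A hub labeling: every pair `u, v` has a common hub on the path between them. -/
def IsHubLabeling {V : Type*} (G : SimpleGraph V) (H : V → Set V) : Prop :=
  ∀ u v : V, ∃ w : V, w ∈ H u ∧ w ∈ H v ∧ onPath G u v w

/-- A hub labeling is hierarchical if the hubs of each vertex have rank at most
the rank of the vertex, for some injective ranking `π : V → ℕ`. -/
def IsHierarchical {V : Type*} (H : V → Set V) : Prop :=
  ∃ π : V → ℕ, Function.Injective π ∧ ∀ u : V, ∀ w ∈ H u, π w ≤ π u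
theorem exists_hierarchical_two_approximation {V : Type*} [Fintype V]
    (G : SimpleGraph V) (hT : G.IsTree) :
    ∃ H : V → Set V, IsHubLabeling G H ∧ IsHierarchical H ∧
      ∀ H' : V → Set V, IsHubLabeling G H' →
        ∑ u : V, (H u).ncard ≤ 2 * ∑ u : V, (H' u).ncard := by
  classical
  have hneV : Nonempty V := hT.isConnected.nonempty
  have hne : (Finset.univ : Finset V).Nonempty := Finset.univ_nonempty
  have hpc : HubAux.PathClosed hT Finset.univ := fun u _ v _ w _ => Finset.mem_univ w
  obtain ⟨H0, r, h1, h2, h3, h4, h5, h6⟩ :=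
    HubAux.main_induction hT (Fintype.card V) Finset.univ
      (le_of_eq Finset.card_univ) hne hpc
  refine ⟨fun u => (↑(H0 u) : Set V), ?_, ?_, ?_⟩
  · intro u v
    obtain ⟨w, hw1, hw2, hw3⟩ := h2 u (Finset.mem_univ u) v (Finset.mem_univ v)
    exact ⟨w, Finset.mem_coe.mpr hw1, Finset.mem_coe.mpr hw2, hw3⟩
  · refine ⟨r, ?_, ?_⟩
    · intro a b hab
      exact h4 (by simp) (by simp) hab
    · intro u w hw
      exact h3 u (Finset.mem_univ u) w (Finset.mem_coe.mp hw)
  · intro H' hH'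
    set F : V → Finset V := fun u => (Set.toFinite (H' u)).toFinset with hF
    have hFmem : ∀ u x, x ∈ F u ↔ x ∈ H' u := by
      intro u x
      rw [hF]
      exact Set.Finite.mem_toFinset _
    have hhub : ∀ u ∈ (Finset.univ : Finset V), ∀ v ∈ (Finset.univ : Finset V),
        ∃ w, w ∈ F u ∧ w ∈ F v ∧ onPath G u v w := by
      intro u _ v _
      obtain ⟨w, hw1, hw2, hw3⟩ := hH' u v
      exact ⟨w, (hFmem u w).mpr hw1, (hFmem v w).mpr hw2, hw3⟩
    have hbound := h6 F hhub
    have hcardeq : ∀ u, ((F u) ∩ Finset.univ).card = (H' u).ncard := by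
      intro u
      rw [Finset.inter_univ, hF]
      exact (Set.ncard_eq_toFinset_card (H' u) (Set.toFinite (H' u))).symm
    have hcardeq2 : ∀ u, ((H0 u : Set V)).ncard = (H0 u).card := fun u =>
      Set.ncard_coe_finset (H0 u)
    calc ∑ u : V, ((H0 u : Set V)).ncard = ∑ u : V, (H0 u).card := by
          exact Finset.sum_congr rfl (fun u _ => hcardeq2 u)
      _ ≤ 2 * ∑ u : V, ((F u) ∩ Finset.univ).card := hbound
      _ = 2 * ∑ u : V, (H' u).ncard := by
          rw [Finset.sum_congr rfl (fun u _ => hcardeq u)]
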